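/- The Gini index of the negative binomial distribution is decreasing in the mean: let k > 0 and 0 < m₁ < m₂. Then (1/(2m₂)) · ∑_{x∈ℕ} ∑_{y∈ℕ} |x − y| · f(x;k,m₂) · f(y;k,m₂) ≤ (1/(2m₁)) · ∑_{x∈ℕ} ∑_{y∈ℕ} |x − y| · f(x;k,m₁) · f(y;k,m₁). -/

import Mathlib

open scoped BigOperators

noncomputable def nbC (a : ℝ) (j : ℕ) : ℝ :=
  Real.Gamma (a + j) / (Real.Gamma a * (Nat.factorial j : ℝ))

lemma nbC_pos {a : ℝ} (ha : 0 < a) (j : ℕ) : 0 < nbC a j := by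
  have h1 : 0 < Real.Gamma (a + j) := Real.Gamma_pos_of_pos (by positivity)
  have h2 : 0 < Real.Gamma a := Real.Gamma_pos_of_pos ha
  have h3 : 0 < (Nat.factorial j : ℝ) := by positivity
  exact div_pos h1 (by positivity)

lemma nbC_zero (a : ℝ) (ha : 0 < a) : nbC a 0 = 1 := by
  have h2 : Real.Gamma a ≠ 0 := ne_of_gt (Real.Gamma_pos_of_pos ha)
  simp [nbC, h2]

lemma nbC_rec {a : ℝ} (ha : 0 < a) (j : ℕ) :
    ((j : ℝ) + 1) * nbC a (j + 1) = (a + j) * nbC a j := by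
  have hpos : (0:ℝ) < a + j := by positivity
  have hG : Real.Gamma (a + (j + 1 : ℕ)) = (a + j) * Real.Gamma (a + j) := by
    have : a + ((j : ℝ) + 1) = (a + j) + 1 := by ring
    rw [Nat.cast_add, Nat.cast_one, this, Real.Gamma_add_one (ne_of_gt hpos)]
  have h2 : Real.Gamma a ≠ 0 := ne_of_gt (Real.Gamma_pos_of_pos ha)
  have h3 : (Nat.factorial j : ℝ) ≠ 0 := by positivity
  have hfact : (Nat.factorial (j+1) : ℝ) = ((j:ℝ)+1) * Nat.factorial j := by
    rw [Nat.factorial_succ]; push_cast; ring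
  rw [nbC, nbC, hG, hfact]
  field_simp

/-- shift of shape: `(a+j) * nbC a j = a * nbC (a+1) j`. -/
lemma nbC_shift {a : ℝ} (ha : 0 < a) (j : ℕ) :
    (a + j) * nbC a j = a * nbC (a + 1) j := by
  have hpos : (0:ℝ) < a + j := by positivity
  have hG : Real.Gamma (a + 1 + j) = (a + j) * Real.Gamma (a + j) := by
    have : a + 1 + (j : ℝ) = (a + j) + 1 := by ring
    rw [this, Real.Gamma_add_one (ne_of_gt hpos)]
  have hGa : Real.Gamma (a + 1) = a * Real.Gamma a := Real.Gamma_add_one (ne_of_gt ha)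
  have h2 : Real.Gamma a ≠ 0 := ne_of_gt (Real.Gamma_pos_of_pos ha)
  have h3 : (Nat.factorial j : ℝ) ≠ 0 := by positivity
  rw [nbC, nbC, hG, hGa]
  field_simp

lemma nbC_summable {a : ℝ} (ha : 0 < a) {ρ : ℝ} (h0 : 0 < ρ) (h1 : ρ < 1) :
    Summable (fun j : ℕ => nbC a j * ρ ^ j) := by
  apply summable_of_ratio_test_tendsto_lt_one h1
  · filter_upwards with n
    exact ne_of_gt (mul_pos (nbC_pos ha n) (pow_pos h0 n))
  · have key : ∀ j : ℕ, ‖nbC a (j+1) * ρ ^ (j+1)‖ / ‖nbC a j * ρ ^ j‖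
        = ρ * ((a + j) / (j + 1)) := by
      intro j
      have hc := nbC_rec ha j
      have hcj : 0 < nbC a j := nbC_pos ha j
      have hcj1 : 0 < nbC a (j+1) := nbC_pos ha (j+1)
      have hj1 : (0:ℝ) < (j:ℝ) + 1 := by positivity
      have hval : nbC a (j+1) = (a + j) * nbC a j / ((j:ℝ)+1) := by
        field_simp at hc ⊢; linarith [hc]
      rw [Real.norm_eq_abs, Real.norm_eq_abs, abs_of_pos (by positivity),
        abs_of_pos (by positivity), hval, pow_succ]
      have haj : (0:ℝ) < a + j := by positivity
      field_simp
    simp_rw [key]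
    have : Filter.Tendsto (fun j : ℕ => (a + j) / ((j:ℝ) + 1)) Filter.atTop (nhds 1) := by
      have h := Filter.Tendsto.const_mul (a - 1)
        (tendsto_one_div_add_atTop_nhds_zero_nat)
      have heq : ∀ j : ℕ, (a + j) / ((j:ℝ) + 1) = 1 + (a - 1) * (1 / ((j:ℝ) + 1)) := by
        intro j
        have : ((j:ℝ) + 1) ≠ 0 := by positivity
        field_simp
        ring
      simp_rw [heq]
      simpa using Filter.Tendsto.const_add 1 h
    simpa using this.const_mul ρ

lemma nbD_bound {a ρ : ℝ} (ha : 0 < a) (h0 : 0 < ρ) (j : ℕ) (y : ℝ) (hy : |y| ≤ ρ) :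
    ‖nbC a j * ((j:ℝ) * y ^ (j-1))‖ ≤ a/ρ * (nbC (a+1) j * ρ ^ j) := by
  have hnb := nbC_pos ha j
  have hnb1 := nbC_pos (by linarith : (0:ℝ) < a + 1) j
  rw [Real.norm_eq_abs, abs_mul, abs_mul, abs_of_pos hnb, Nat.abs_cast, abs_pow]
  cases j with
  | zero => simp; positivity
  | succ s =>
      have h1 : |y| ^ (s + 1 - 1) ≤ ρ ^ s := by
        simpa using pow_le_pow_left₀ (abs_nonneg y) hy s
      have h2 : ((s:ℝ) + 1) * nbC a (s+1) ≤ a * nbC (a+1) (s+1) := by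
        rw [← nbC_shift ha (s+1)]
        have : ((s+1 : ℕ) : ℝ) ≤ a + (s+1 : ℕ) := by
          push_cast; linarith
        push_cast at this ⊢
        nlinarith [nbC_pos ha (s+1)]
      have hρpow : (0:ℝ) < ρ ^ s := pow_pos h0 s
      calc nbC a (s+1) * (((s+1:ℕ):ℝ) * |y| ^ (s+1-1))
          ≤ nbC a (s+1) * (((s+1:ℕ):ℝ) * ρ ^ s) := by
            apply mul_le_mul_of_nonneg_left _ (le_of_lt hnb)
            apply mul_le_mul_of_nonneg_left h1 (by positivity)
        _ = (((s:ℝ) + 1) * nbC a (s+1)) * ρ ^ s := by push_cast; ring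
        _ ≤ (a * nbC (a+1) (s+1)) * ρ ^ s := by
            exact mul_le_mul_of_nonneg_right h2 (le_of_lt hρpow)
        _ = a/ρ * (nbC (a+1) (s+1) * ρ ^ (s+1)) := by
            rw [pow_succ]
            field_simp

lemma nbC_summable_abs {a : ℝ} (ha : 0 < a) {y : ℝ} (hy : |y| < 1) :
    Summable (fun j : ℕ => nbC a j * y ^ j) := by
  set ρ : ℝ := (|y| + 1)/2 with hρ
  have h0 : 0 < ρ := by positivity
  have h1 : ρ < 1 := by
    rw [hρ]; linarith
  have hyρ : |y| ≤ ρ := by rw [hρ]; linarith [abs_nonneg y]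
  apply Summable.of_norm_bounded (nbC_summable ha h0 h1)
  intro j
  rw [Real.norm_eq_abs, abs_mul, abs_of_pos (nbC_pos ha j), abs_pow]
  exact mul_le_mul_of_nonneg_left (pow_le_pow_left₀ (abs_nonneg y) hyρ j)
    (le_of_lt (nbC_pos ha j))

lemma nbD_summable {a : ℝ} (ha : 0 < a) {y : ℝ} (hy : |y| < 1) :
    Summable (fun j : ℕ => nbC a j * ((j:ℝ) * y ^ (j-1))) := by
  set ρ : ℝ := (|y| + 1)/2 with hρ
  have h0 : 0 < ρ := by positivity
  have h1 : ρ < 1 := by rw [hρ]; linarith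
  have hyρ : |y| ≤ ρ := by rw [hρ]; linarith [abs_nonneg y]
  apply Summable.of_norm_bounded
    (((nbC_summable (by linarith : (0:ℝ) < a + 1) h0 h1)).mul_left (a/ρ))
  intro j
  exact nbD_bound ha h0 j y hyρ

/-- The generalized binomial series. -/
lemma nbC_hasSum {a : ℝ} (ha : 0 < a) {r : ℝ} (hr0 : 0 ≤ r) (hr1 : r < 1) :
    HasSum (fun j : ℕ => nbC a j * r ^ j) ((1 - r) ^ (-a : ℝ)) := by
  set ρ : ℝ := (r + 1)/2 with hρ
  have h0 : 0 < ρ := by positivity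
  have h1 : ρ < 1 := by rw [hρ]; linarith
  have hrρ : r < ρ := by rw [hρ]; linarith
  set t : Set ℝ := Set.Ioo (-ρ) ρ with ht
  have htO : IsOpen t := isOpen_Ioo
  have htP : IsPreconnected t := isPreconnected_Ioo
  have hmem : ∀ y : ℝ, 0 ≤ y → y ≤ r → y ∈ t := by
    intro y hy1 hy2
    exact ⟨by linarith, by linarith⟩
  -- summable bound for derivatives
  have hu : Summable (fun j : ℕ => a/ρ * (nbC (a+1) j * ρ ^ j)) :=
    (nbC_summable (by linarith : (0:ℝ) < a + 1) h0 h1).mul_left (a/ρ)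
  have hg : ∀ (j : ℕ) (y : ℝ), y ∈ t →
      HasDerivAt (fun z : ℝ => nbC a j * z ^ j) (nbC a j * ((j:ℝ) * y ^ (j-1))) y := by
    intro j y _
    exact (hasDerivAt_pow j y).const_mul (nbC a j)
  have hg' : ∀ (j : ℕ) (y : ℝ), y ∈ t →
      ‖nbC a j * ((j:ℝ) * y ^ (j-1))‖ ≤ a/ρ * (nbC (a+1) j * ρ ^ j) := by
    intro j y hyt
    apply nbD_bound ha h0 j y
    rw [abs_le]
    exact ⟨le_of_lt hyt.1, le_of_lt hyt.2⟩
  have hy₀ : (0:ℝ) ∈ t := ⟨by linarith, by linarith⟩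
  have hg0 : Summable (fun j : ℕ => nbC a j * (0:ℝ) ^ j) :=
    nbC_summable_abs ha (by simp)
  -- derivative of g
  set g : ℝ → ℝ := fun z => ∑' j : ℕ, nbC a j * z ^ j with hgdef
  have hD : ∀ y ∈ t, HasDerivAt g (∑' j : ℕ, nbC a j * ((j:ℝ) * y ^ (j-1))) y := by
    intro y hy
    exact hasDerivAt_tsum_of_isPreconnected hu htO htP hg hg' hy₀ hg0 hy
  -- ODE identity on [0, r]
  have habs : ∀ y : ℝ, 0 ≤ y → y ≤ r → |y| < 1 := by
    intro y hy1 hy2; rw [abs_of_nonneg hy1]; linarith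
  have hODE : ∀ y : ℝ, 0 ≤ y → y ≤ r →
      (1 - y) * (∑' j : ℕ, nbC a j * ((j:ℝ) * y ^ (j-1))) = a * g y := by
    intro y hy1 hy2
    have hay := habs y hy1 hy2
    have S0 : Summable (fun j : ℕ => nbC a j * y ^ j) := nbC_summable_abs ha hay
    have S2 : Summable (fun j : ℕ => (a + (j:ℝ)) * nbC a j * y ^ j) := by
      have := (nbC_summable_abs (by linarith : (0:ℝ) < a + 1) hay).mul_left a
      apply this.congr
      intro j
      rw [← mul_assoc, ← nbC_shift ha j]
    have S3 : Summable (fun j : ℕ => (j:ℝ) * nbC a j * y ^ j) := by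
      apply Summable.of_nonneg_of_le _ _ S2
      · intro j
        have := nbC_pos ha j
        positivity
      · intro j
        have hnb := nbC_pos ha j
        have hyj : (0:ℝ) ≤ y ^ j := by positivity
        apply mul_le_mul_of_nonneg_right _ hyj
        apply mul_le_mul_of_nonneg_right _ (le_of_lt hnb)
        linarith
    have S1 : Summable (fun j : ℕ => nbC a j * ((j:ℝ) * y ^ (j-1))) := nbD_summable ha hay
    -- step 1 : D = ∑ (a+j) c_j y^j
    have step1 : (∑' j : ℕ, nbC a j * ((j:ℝ) * y ^ (j-1)))
        = ∑' j : ℕ, (a + (j:ℝ)) * nbC a j * y ^ j := by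
      rw [Summable.tsum_eq_zero_add S1]
      simp only [Nat.cast_zero, zero_mul, mul_zero, zero_add]
      congr 1
      funext j
      have : nbC a (j+1) * (((j+1:ℕ):ℝ) * y ^ (j+1-1)) = (((j:ℝ)+1) * nbC a (j+1)) * y ^ j := by
        push_cast; ring
      rw [this, nbC_rec ha j]
    -- step 2 : y * D = ∑ j c_j y^j
    have step2 : y * (∑' j : ℕ, nbC a j * ((j:ℝ) * y ^ (j-1)))
        = ∑' j : ℕ, (j:ℝ) * nbC a j * y ^ j := by
      rw [← tsum_mul_left]
      congr 1
      funext j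
      cases j with
      | zero => simp
      | succ s => rw [pow_succ]; push_cast; ring
    rw [sub_mul, one_mul, step2, step1, ← Summable.tsum_sub S2 S3]
    have : (fun j : ℕ => (a + (j:ℝ)) * nbC a j * y ^ j - (j:ℝ) * nbC a j * y ^ j)
        = fun j : ℕ => a * (nbC a j * y ^ j) := by
      funext j; ring
    rw [this, tsum_mul_left]
  -- the auxiliary function h
  set h : ℝ → ℝ := fun y => (1 - y) ^ (a:ℝ) * g y with hhdef
  have hDh : ∀ y ∈ t, HasDerivAt h
      ((a * (1-y) ^ (a-1) * (-1)) * g y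
        + (1 - y) ^ (a:ℝ) * (∑' j : ℕ, nbC a j * ((j:ℝ) * y ^ (j-1)))) y := by
    intro y hy
    have h1y : (0:ℝ) < 1 - y := by
      have := hy.2; simp only [ht, Set.mem_Ioo] at hy; linarith [hy.2]
    have inner : HasDerivAt (fun z : ℝ => 1 - z) (-1) y := by
      simpa using (hasDerivAt_id y).const_sub 1
    have outer := Real.hasDerivAt_rpow_const (x := 1 - y) (p := a) (Or.inl (ne_of_gt h1y))
    have hcomp : HasDerivAt (fun z : ℝ => (1 - z) ^ (a:ℝ)) (a * (1-y) ^ (a-1) * (-1)) y :=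
      HasDerivAt.comp y outer inner
    exact hcomp.mul (hD y hy)
  have hderiv0 : ∀ y : ℝ, 0 ≤ y → y ≤ r → HasDerivAt h 0 y := by
    intro y hy1 hy2
    have hyt := hmem y hy1 hy2
    have h1y : (0:ℝ) < 1 - y := by linarith
    have := hDh y hyt
    have hval : (a * (1-y) ^ (a-1) * (-1)) * g y
        + (1 - y) ^ (a:ℝ) * (∑' j : ℕ, nbC a j * ((j:ℝ) * y ^ (j-1))) = 0 := by
      have hsplit : (1 - y) ^ (a:ℝ) = (1-y) ^ (a-1) * (1-y) := by
        have h2 := Real.rpow_add h1y (a-1) 1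
        rw [Real.rpow_one] at h2
        rw [← h2]
        norm_num
      rw [hsplit]
      linear_combination ((1:ℝ) - y) ^ (a-1) * (hODE y hy1 hy2)
    rwa [hval] at this
  -- h is constant on [0, r]
  have hcont : ContinuousOn h (Set.Icc 0 r) := by
    intro y hy
    exact ((hderiv0 y hy.1 hy.2).continuousAt).continuousWithinAt
  have hconst : h r = h 0 := by
    apply constant_of_has_deriv_right_zero hcont
    · intro y hy
      exact (hderiv0 y hy.1 (le_of_lt hy.2)).hasDerivWithinAt
    · exact Set.right_mem_Icc.mpr hr0
  -- evaluate h 0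
  have hg0val : g 0 = 1 := by
    have : g 0 = ∑' j : ℕ, nbC a j * (0:ℝ) ^ j := rfl
    rw [this, tsum_eq_single 0 (by intro b hb; simp [zero_pow hb])]
    simp [nbC_zero a ha]
  have hh0 : h 0 = 1 := by
    have : h 0 = (1 - (0:ℝ)) ^ (a:ℝ) * g 0 := rfl
    rw [this, hg0val]
    norm_num
  have hkey : (1 - r) ^ (a:ℝ) * g r = 1 := by
    have h1 : h r = h 0 := hconst
    rw [hh0] at h1
    exact h1
  have h1r : (0:ℝ) < 1 - r := by linarith
  have hgr : g r = (1 - r) ^ (-a : ℝ) := by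
    rw [Real.rpow_neg (le_of_lt h1r)]
    exact eq_inv_of_mul_eq_one_left (by linear_combination hkey)
  have hsum := (nbC_summable_abs ha (by rw [abs_of_nonneg hr0]; exact hr1)).hasSum
  have heq : g r = ∑' j : ℕ, nbC a j * r ^ j := rfl
  rw [← heq, hgr] at hsum
  exact hsum

/-- Probability mass function of the negative binomial distribution with
shape `k > 0` and mean `m > 0`. -/
noncomputable def nbPmf (k m : ℝ) (x : ℕ) : ℝ :=
  Real.Gamma (k + x) / (Real.Gamma k * (Nat.factorial x : ℝ)) *
    (k / (k + m)) ^ (k : ℝ) * (m / (k + m)) ^ x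

lemma nbPmf_eq (k m : ℝ) (x : ℕ) :
    nbPmf k m x = nbC k x * (k / (k + m)) ^ (k : ℝ) * (m / (k + m)) ^ x := rfl

section nb
variable {k m : ℝ} (hk : 0 < k) (hm : 0 < m)
include hk hm

lemma nb_theta_nonneg : 0 ≤ m / (k + m) := by positivity

lemma nb_theta_lt_one : m / (k + m) < 1 := by
  rw [div_lt_one (by positivity)]; linarith

lemma nb_p_pos : 0 < k / (k + m) := by positivity

lemma nb_one_sub_theta : 1 - m / (k + m) = k / (k + m) := by
  field_simp
  ring

lemma nbPmf_nonneg (x : ℕ) : 0 ≤ nbPmf k m x := by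
  rw [nbPmf_eq]
  have h1 := nbC_pos hk x
  have h2 : (0:ℝ) < (k / (k + m)) ^ (k : ℝ) := Real.rpow_pos_of_pos (nb_p_pos hk hm) k
  have h3 : (0:ℝ) ≤ (m / (k + m)) ^ x := by positivity
  positivity

lemma hasSum_nbPmf : HasSum (nbPmf k m) 1 := by
  have core := nbC_hasSum hk (nb_theta_nonneg hk hm) (nb_theta_lt_one hk hm)
  have h := core.mul_right ((k / (k + m)) ^ (k : ℝ))
  have hval : (1 - m / (k + m)) ^ (-k : ℝ) * (k / (k + m)) ^ (k : ℝ) = 1 := by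
    rw [nb_one_sub_theta hk hm, Real.rpow_neg (le_of_lt (nb_p_pos hk hm))]
    exact inv_mul_cancel₀ (ne_of_gt (Real.rpow_pos_of_pos (nb_p_pos hk hm) k))
  rw [hval] at h
  apply h.congr_fun
  intro x
  rw [nbPmf_eq]; ring

lemma hasSum_nbMean : HasSum (fun x : ℕ => (x:ℝ) * nbPmf k m x) m := by
  have hθ0 : (0:ℝ) ≤ m/(k+m) := by positivity
  have hθ1 : m/(k+m) < 1 := nb_theta_lt_one hk hm
  have hppos : (0:ℝ) < k/(k+m) := by positivity
  have hpk : (0:ℝ) < (k/(k+m)) ^ (k:ℝ) := Real.rpow_pos_of_pos hppos k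
  have hkm : k + m ≠ 0 := by positivity
  have hk' : k ≠ 0 := ne_of_gt hk
  have core := nbC_hasSum (show (0:ℝ) < k+1 by linarith) hθ0 hθ1
  have h := core.mul_left (k * (m/(k+m)) * (k/(k+m)) ^ (k:ℝ))
  have hfun : ∀ j : ℕ, k * (m/(k+m)) * (k/(k+m)) ^ (k:ℝ) * (nbC (k+1) j * (m/(k+m)) ^ j)
      = ((j+1 : ℕ):ℝ) * nbPmf k m (j+1) := by
    intro j
    have h1 : ((j:ℝ) + 1) * nbC k (j+1) = k * nbC (k+1) j := by
      rw [nbC_rec hk j, nbC_shift hk j]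
    rw [nbPmf_eq, pow_succ]
    push_cast
    linear_combination (-((k/(k+m)) ^ (k:ℝ) * (m/(k+m)) ^ j * (m/(k+m)))) * h1
  have hval : k * (m/(k+m)) * (k/(k+m)) ^ (k:ℝ) * (1 - m/(k+m)) ^ (-(k+1) : ℝ) = m := by
    rw [nb_one_sub_theta hk hm]
    have hsplit : (k/(k+m)) ^ (-(k+1) : ℝ) = ((k/(k+m)) ^ (k:ℝ))⁻¹ * (k/(k+m))⁻¹ := by
      rw [show (-(k+1) : ℝ) = (-k) + (-1) by ring, Real.rpow_add hppos,
        Real.rpow_neg (le_of_lt hppos), Real.rpow_neg_one]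
    rw [hsplit]
    field_simp
  rw [hval] at h
  have h3 : HasSum (fun j : ℕ => (((j+1 : ℕ)):ℝ) * nbPmf k m (j+1)) m := by
    apply h.congr_fun
    intro j
    exact (hfun j).symm
  have h2 := (hasSum_nat_add_iff (f := fun x : ℕ => (x:ℝ) * nbPmf k m x) 1).mp h3
  simpa using h2

end nb

/-! ### Binomial pmf -/

noncomputable def binPmf (α : ℝ) (x y : ℕ) : ℝ :=
  (x.choose y : ℝ) * α ^ y * (1 - α) ^ (x - y)

lemma binPmf_nonneg {α : ℝ} (h0 : 0 ≤ α) (h1 : α ≤ 1) (x y : ℕ) : 0 ≤ binPmf α x y := by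
  rw [binPmf]
  have : (0:ℝ) ≤ 1 - α := by linarith
  positivity

lemma binPmf_eq_zero {α : ℝ} {x y : ℕ} (h : x < y) : binPmf α x y = 0 := by
  rw [binPmf, Nat.choose_eq_zero_of_lt h]
  simp

lemma binPmf_sum (α : ℝ) (x : ℕ) : ∑ y ∈ Finset.range (x+1), binPmf α x y = 1 := by
  have h := add_pow α (1 - α) x
  simp only [add_sub_cancel, one_pow] at h
  rw [eq_comm, h]
  apply Finset.sum_congr rfl
  intro y _
  rw [binPmf]; ring

lemma binPmf_mean (α : ℝ) (x : ℕ) :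
    ∑ y ∈ Finset.range (x+1), (y:ℝ) * binPmf α x y = α * x := by
  cases x with
  | zero => simp
  | succ w =>
      rw [Finset.sum_range_succ']
      simp only [Nat.cast_zero, zero_mul, add_zero]
      have hterm : ∀ z : ℕ, ((z+1:ℕ):ℝ) * binPmf α (w+1) (z+1)
          = (α * ((w:ℝ)+1)) * binPmf α w z := by
        intro z
        rw [binPmf, binPmf]
        have h2 : ((w+1) * w.choose z : ℕ) = ((w+1).choose (z+1) * (z+1) : ℕ) := by
          simpa [Nat.succ_eq_add_one] using (Nat.add_one_mul_choose_eq w z)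
        have hch : ((w:ℝ)+1) * (w.choose z : ℝ) = ((w+1).choose (z+1) : ℝ) * ((z:ℝ)+1) := by
          exact_mod_cast congrArg (fun n : ℕ => (n:ℝ)) h2
        have hsub : w + 1 - (z + 1) = w - z := by omega
        rw [hsub, pow_succ]
        push_cast
        linear_combination (-(α^z * α * (1-α)^(w-z))) * hch
      rw [Finset.sum_congr rfl (fun z _ => hterm z), ← Finset.mul_sum, binPmf_sum]
      push_cast; ring

lemma nbC_mul_choose {k : ℝ} (hk : 0 < k) (j y : ℕ) :
    nbC k (j+y) * (((j+y).choose y : ℕ) : ℝ) = nbC k y * nbC (k + (y:ℝ)) j := by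
  have hky : (0:ℝ) < k + (y:ℝ) := by positivity
  have hGk : Real.Gamma k ≠ 0 := ne_of_gt (Real.Gamma_pos_of_pos hk)
  have hGky : Real.Gamma (k + (y:ℝ)) ≠ 0 := ne_of_gt (Real.Gamma_pos_of_pos hky)
  have hGarg : Real.Gamma (k + ((j+y:ℕ):ℝ)) = Real.Gamma (k + (y:ℝ) + (j:ℝ)) := by
    congr 1; push_cast; ring
  have hfacR := congrArg (fun n : ℕ => (n:ℝ)) (Nat.add_choose_mul_factorial_mul_factorial j y)
  push_cast at hfacR
  have f1 : ((j+y).factorial : ℝ) ≠ 0 := by positivity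
  have f2 : (j.factorial : ℝ) ≠ 0 := by positivity
  have f3 : (y.factorial : ℝ) ≠ 0 := by positivity
  unfold nbC
  rw [hGarg]
  field_simp
  linear_combination hfacR

lemma hasSum_mix {k m₁ m₂ : ℝ} (hk : 0 < k) (hm₁ : 0 < m₁) (hm : m₁ < m₂) (y : ℕ) :
    HasSum (fun x : ℕ => nbPmf k m₂ x * binPmf (m₁/m₂) x y) (nbPmf k m₁ y) := by
  have hm₂ : 0 < m₂ := lt_trans hm₁ hm
  have hα0 : 0 < m₁/m₂ := by positivity
  have hα1 : m₁/m₂ < 1 := (div_lt_one hm₂).mpr hm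
  have hθ2 : (0:ℝ) ≤ m₂/(k+m₂) := by positivity
  have hθ2lt := nb_theta_lt_one hk hm₂
  have hr0 : (0:ℝ) ≤ m₂/(k+m₂) * (1 - m₁/m₂) := by
    apply mul_nonneg hθ2; linarith
  have hr1 : m₂/(k+m₂) * (1 - m₁/m₂) < 1 := by
    have h1 : m₂/(k+m₂) * (1 - m₁/m₂) ≤ m₂/(k+m₂) * 1 := by
      apply mul_le_mul_of_nonneg_left _ hθ2
      linarith
    linarith
  have hky : (0:ℝ) < k + (y:ℝ) := by positivity
  have core := nbC_hasSum hky hr0 hr1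
  have h := core.mul_left
    (nbC k y * ((m₁/m₂) * (m₂/(k+m₂)))^y * (k/(k+m₂)) ^ (k:ℝ))
  have h1r : 1 - m₂/(k+m₂) * (1 - m₁/m₂) = (k+m₁)/(k+m₂) := by
    field_simp
    ring
  rw [h1r] at h
  -- term identity
  have hterm : ∀ j : ℕ,
      nbC k y * ((m₁/m₂) * (m₂/(k+m₂)))^y * (k/(k+m₂)) ^ (k:ℝ)
        * (nbC (k + (y:ℝ)) j * (m₂/(k+m₂) * (1 - m₁/m₂)) ^ j)
      = nbPmf k m₂ (j+y) * binPmf (m₁/m₂) (j+y) y := by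
    intro j
    rw [nbPmf_eq, binPmf, Nat.add_sub_cancel, pow_add]
    simp only [mul_pow]
    have hC := nbC_mul_choose hk j y
    linear_combination (-((k/(k+m₂)) ^ (k:ℝ) * (m₂/(k+m₂))^j * (m₂/(k+m₂))^y
        * (m₁/m₂)^y * (1 - m₁/m₂)^j)) * hC
  -- sum the shifted series
  have hshift : HasSum (fun j : ℕ => nbPmf k m₂ (j+y) * binPmf (m₁/m₂) (j+y) y)
      (nbC k y * ((m₁/m₂) * (m₂/(k+m₂)))^y * (k/(k+m₂)) ^ (k:ℝ)
        * ((k+m₁)/(k+m₂)) ^ (-(k + (y:ℝ)) : ℝ)) := by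
    apply h.congr_fun
    intro j
    exact (hterm j).symm
  have hfull := (hasSum_nat_add_iff
    (f := fun x : ℕ => nbPmf k m₂ x * binPmf (m₁/m₂) x y) y).mp hshift
  have hzero : ∑ i ∈ Finset.range y, nbPmf k m₂ i * binPmf (m₁/m₂) i y = 0 := by
    apply Finset.sum_eq_zero
    intro i hi
    rw [binPmf_eq_zero (Finset.mem_range.mp hi), mul_zero]
  rw [hzero, add_zero] at hfull
  -- now identify the value
  have hq : (0:ℝ) < (k+m₁)/(k+m₂) := by positivity
  have hval : nbC k y * ((m₁/m₂) * (m₂/(k+m₂)))^y * (k/(k+m₂)) ^ (k:ℝ)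
      * ((k+m₁)/(k+m₂)) ^ (-(k + (y:ℝ)) : ℝ) = nbPmf k m₁ y := by
    rw [nbPmf_eq]
    rw [show (-(k + (y:ℝ)) : ℝ) = (-k) + (-(y:ℝ)) by ring, Real.rpow_add hq,
      Real.rpow_neg hq.le k, Real.rpow_neg hq.le (y:ℝ), Real.rpow_natCast]
    have hp12 : (k/(k+m₁)) ^ (k:ℝ) = (k/(k+m₂)) ^ (k:ℝ) * (((k+m₁)/(k+m₂)) ^ (k:ℝ))⁻¹ := by
      rw [← div_eq_mul_inv, ← Real.div_rpow (by positivity) hq.le]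
      congr 1
      field_simp
      try ring
    have hθ12 : (m₁/(k+m₁) : ℝ) ^ y = (((m₁/m₂) * (m₂/(k+m₂)))^y) * (((k+m₁)/(k+m₂))^y)⁻¹ := by
      rw [← div_eq_mul_inv, ← div_pow]
      congr 1
      field_simp
      try ring
    rw [hp12, hθ12]
    ring
  rw [hval] at hfull
  exact hfull

lemma jensen_bin {α : ℝ} (h0 : 0 ≤ α) (h1 : α ≤ 1) (x x' : ℕ) :
    α * |(x:ℝ) - (x':ℝ)| ≤ ∑ y ∈ Finset.range (x+1), ∑ y' ∈ Finset.range (x'+1),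
      |(y:ℝ) - (y':ℝ)| * binPmf α x y * binPmf α x' y' := by
  have hb : ∀ a b : ℕ, 0 ≤ binPmf α a b := fun a b => binPmf_nonneg h0 h1 a b
  have e0 : ∀ y : ℕ, ∑ y' ∈ Finset.range (x'+1), ((y:ℝ) - (y':ℝ)) * binPmf α x' y'
      = (y:ℝ) - α * x' := by
    intro y
    have hcong : ∀ y' ∈ Finset.range (x'+1), ((y:ℝ) - y') * binPmf α x' y'
        = (y:ℝ) * binPmf α x' y' - (y':ℝ) * binPmf α x' y' := by
      intro y' _; ring
    rw [Finset.sum_congr rfl hcong, Finset.sum_sub_distrib, ← Finset.mul_sum, binPmf_sum,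
      binPmf_mean]
    ring
  have key : ∑ y ∈ Finset.range (x+1), ∑ y' ∈ Finset.range (x'+1),
      ((y:ℝ) - (y':ℝ)) * binPmf α x y * binPmf α x' y' = α * x - α * x' := by
    have inner : ∀ y : ℕ, ∑ y' ∈ Finset.range (x'+1),
        ((y:ℝ) - (y':ℝ)) * binPmf α x y * binPmf α x' y'
        = binPmf α x y * ((y:ℝ) - α * x') := by
      intro y
      have hcong : ∀ y' ∈ Finset.range (x'+1),
          ((y:ℝ) - y') * binPmf α x y * binPmf α x' y'
          = binPmf α x y * (((y:ℝ) - y') * binPmf α x' y') := by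
        intro y' _; ring
      rw [Finset.sum_congr rfl hcong, ← Finset.mul_sum, e0]
    rw [Finset.sum_congr rfl (fun y _ => inner y)]
    have hcong2 : ∀ y ∈ Finset.range (x+1),
        binPmf α x y * ((y:ℝ) - α * x')
        = (y:ℝ) * binPmf α x y - (α * x') * binPmf α x y := by
      intro y _; ring
    rw [Finset.sum_congr rfl hcong2, Finset.sum_sub_distrib, binPmf_mean, ← Finset.mul_sum,
      binPmf_sum]
    ring
  have h2 : α * |(x:ℝ) - x'| = |α * (x:ℝ) - α * x'| := by
    rw [← mul_sub, abs_mul, abs_of_nonneg h0]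
  rw [h2, ← key]
  calc |∑ y ∈ Finset.range (x+1), ∑ y' ∈ Finset.range (x'+1),
      ((y:ℝ) - (y':ℝ)) * binPmf α x y * binPmf α x' y'|
      ≤ ∑ y ∈ Finset.range (x+1), |∑ y' ∈ Finset.range (x'+1),
        ((y:ℝ) - (y':ℝ)) * binPmf α x y * binPmf α x' y'| :=
        Finset.abs_sum_le_sum_abs _ _
    _ ≤ ∑ y ∈ Finset.range (x+1), ∑ y' ∈ Finset.range (x'+1),
        |(y:ℝ) - (y':ℝ)| * binPmf α x y * binPmf α x' y' := by
        apply Finset.sum_le_sum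
        intro y _
        calc |∑ y' ∈ Finset.range (x'+1), ((y:ℝ) - (y':ℝ)) * binPmf α x y * binPmf α x' y'|
            ≤ ∑ y' ∈ Finset.range (x'+1), |((y:ℝ) - (y':ℝ)) * binPmf α x y * binPmf α x' y'| :=
              Finset.abs_sum_le_sum_abs _ _
          _ = ∑ y' ∈ Finset.range (x'+1), |(y:ℝ) - (y':ℝ)| * binPmf α x y * binPmf α x' y' := by
              apply Finset.sum_congr rfl
              intro y' _
              rw [abs_mul, abs_mul, abs_of_nonneg (hb x y), abs_of_nonneg (hb x' y')]

lemma ENN_prod_mul (F G : ℕ → ENNReal) :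
    ∑' z : ℕ × ℕ, F z.1 * G z.2 = (∑' n, F n) * (∑' n, G n) := by
  rw [ENNReal.tsum_prod']
  simp_rw [ENNReal.tsum_mul_left]
  rw [ENNReal.tsum_mul_right]

lemma G_ne_top {k m : ℝ} (hk : 0 < k) (hm : 0 < m) :
    ∑' z : ℕ × ℕ, ENNReal.ofReal (|(z.1:ℝ) - (z.2:ℝ)| * nbPmf k m z.1 * nbPmf k m z.2) ≠ ⊤ := by
  have hf := nbPmf_nonneg hk hm
  have key : ∀ z : ℕ × ℕ,
      ENNReal.ofReal (|(z.1:ℝ) - (z.2:ℝ)| * nbPmf k m z.1 * nbPmf k m z.2)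
      ≤ ENNReal.ofReal ((z.1:ℝ) * nbPmf k m z.1) * ENNReal.ofReal (nbPmf k m z.2)
        + ENNReal.ofReal (nbPmf k m z.1) * ENNReal.ofReal ((z.2:ℝ) * nbPmf k m z.2) := by
    intro z
    have n1 : (0:ℝ) ≤ (z.1:ℝ) * nbPmf k m z.1 := mul_nonneg (Nat.cast_nonneg _) (hf _)
    have n2 : (0:ℝ) ≤ (z.2:ℝ) * nbPmf k m z.2 := mul_nonneg (Nat.cast_nonneg _) (hf _)
    rw [← ENNReal.ofReal_mul n1, ← ENNReal.ofReal_mul (hf z.1),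
      ← ENNReal.ofReal_add (mul_nonneg n1 (hf z.2)) (mul_nonneg (hf z.1) n2)]
    apply ENNReal.ofReal_le_ofReal
    have habs : |(z.1:ℝ) - (z.2:ℝ)| ≤ (z.1:ℝ) + (z.2:ℝ) := by
      rw [abs_sub_le_iff]
      constructor <;> linarith [Nat.cast_nonneg (α := ℝ) z.1, Nat.cast_nonneg (α := ℝ) z.2]
    calc |(z.1:ℝ) - (z.2:ℝ)| * nbPmf k m z.1 * nbPmf k m z.2
        ≤ ((z.1:ℝ) + (z.2:ℝ)) * nbPmf k m z.1 * nbPmf k m z.2 := by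
          apply mul_le_mul_of_nonneg_right _ (hf z.2)
          exact mul_le_mul_of_nonneg_right habs (hf z.1)
      _ = (z.1:ℝ) * nbPmf k m z.1 * nbPmf k m z.2 + nbPmf k m z.1 * ((z.2:ℝ) * nbPmf k m z.2) := by
          ring
  have hb := ENNReal.tsum_le_tsum key
  have hsplit : ∑' z : ℕ × ℕ,
      (ENNReal.ofReal ((z.1:ℝ) * nbPmf k m z.1) * ENNReal.ofReal (nbPmf k m z.2)
        + ENNReal.ofReal (nbPmf k m z.1) * ENNReal.ofReal ((z.2:ℝ) * nbPmf k m z.2))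
      = ENNReal.ofReal m * ENNReal.ofReal 1 + ENNReal.ofReal 1 * ENNReal.ofReal m := by
    have p1 : (∑' z : ℕ × ℕ, ENNReal.ofReal ((z.1:ℝ) * nbPmf k m z.1)
        * ENNReal.ofReal (nbPmf k m z.2))
        = (∑' n : ℕ, ENNReal.ofReal ((n:ℝ) * nbPmf k m n))
          * (∑' n : ℕ, ENNReal.ofReal (nbPmf k m n)) :=
      ENN_prod_mul (fun n => ENNReal.ofReal ((n:ℝ) * nbPmf k m n))
        (fun n => ENNReal.ofReal (nbPmf k m n))
    have p2 : (∑' z : ℕ × ℕ, ENNReal.ofReal (nbPmf k m z.1)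
        * ENNReal.ofReal ((z.2:ℝ) * nbPmf k m z.2))
        = (∑' n : ℕ, ENNReal.ofReal (nbPmf k m n))
          * (∑' n : ℕ, ENNReal.ofReal ((n:ℝ) * nbPmf k m n)) :=
      ENN_prod_mul (fun n => ENNReal.ofReal (nbPmf k m n))
        (fun n => ENNReal.ofReal ((n:ℝ) * nbPmf k m n))
    rw [ENNReal.tsum_add, p1, p2]
    have e1 : ∑' n : ℕ, ENNReal.ofReal ((n:ℝ) * nbPmf k m n) = ENNReal.ofReal m := by
      rw [← ENNReal.ofReal_tsum_of_nonneg (fun n => mul_nonneg (Nat.cast_nonneg n) (hf n))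
        (hasSum_nbMean hk hm).summable]
      exact congrArg ENNReal.ofReal (hasSum_nbMean hk hm).tsum_eq
    have e2 : ∑' n : ℕ, ENNReal.ofReal (nbPmf k m n) = ENNReal.ofReal 1 := by
      rw [← ENNReal.ofReal_tsum_of_nonneg hf (hasSum_nbPmf hk hm).summable]
      exact congrArg ENNReal.ofReal (hasSum_nbPmf hk hm).tsum_eq
    rw [e1, e2]
  rw [hsplit] at hb
  exact ne_top_of_le_ne_top (by simp [ENNReal.add_ne_top, ENNReal.mul_ne_top]) hb

lemma ENN_prod_mul_const (F G : ℕ → ENNReal) (c : ENNReal) :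
    ∑' w : ℕ × ℕ, F w.1 * G w.2 * c = (∑' n, F n) * (∑' n, G n) * c := by
  rw [ENNReal.tsum_mul_right, ENN_prod_mul]

lemma real_tsum_eq_toReal (W : ℕ → ℕ → ℝ) (hW : ∀ x y, 0 ≤ W x y)
    (hfin : (∑' z : ℕ × ℕ, ENNReal.ofReal (W z.1 z.2)) ≠ ⊤) :
    ∑' x : ℕ, ∑' y : ℕ, W x y = (∑' z : ℕ × ℕ, ENNReal.ofReal (W z.1 z.2)).toReal := by
  have h1 : (∑' z : ℕ × ℕ, ENNReal.ofReal (W z.1 z.2))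
      = ∑' x : ℕ, ∑' y : ℕ, ENNReal.ofReal (W x y) :=
    ENNReal.tsum_prod (f := fun x y => ENNReal.ofReal (W x y))
  rw [h1] at hfin ⊢
  have hIx : ∀ x : ℕ, (∑' y : ℕ, ENNReal.ofReal (W x y)) ≠ ⊤ :=
    fun x => ne_top_of_le_ne_top hfin (ENNReal.le_tsum x)
  rw [ENNReal.tsum_toReal_eq hIx]
  apply tsum_congr
  intro x
  rw [ENNReal.tsum_toReal_eq (fun y => ENNReal.ofReal_ne_top)]
  apply tsum_congr
  intro y
  rw [ENNReal.toReal_ofReal (hW x y)]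

lemma bin_tsum {α : ℝ} (h0 : 0 ≤ α) (h1 : α ≤ 1) (x x' : ℕ) :
    ∑' z : ℕ × ℕ, ENNReal.ofReal (|(z.1:ℝ) - (z.2:ℝ)| * binPmf α x z.1 * binPmf α x' z.2)
      = ENNReal.ofReal (∑ y ∈ Finset.range (x+1), ∑ y' ∈ Finset.range (x'+1),
          |(y:ℝ) - (y':ℝ)| * binPmf α x y * binPmf α x' y') := by
  have hb : ∀ a b : ℕ, 0 ≤ binPmf α a b := fun a b => binPmf_nonneg h0 h1 a b
  have hvan : ∀ z : ℕ × ℕ, z ∉ Finset.range (x+1) ×ˢ Finset.range (x'+1) →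
      ENNReal.ofReal (|(z.1:ℝ) - (z.2:ℝ)| * binPmf α x z.1 * binPmf α x' z.2) = 0 := by
    intro z hz
    rw [Finset.mem_product] at hz
    push_neg at hz
    by_cases hz1 : z.1 ∈ Finset.range (x+1)
    · have hz2 : x' < z.2 := by
        have := hz hz1
        rw [Finset.mem_range] at this
        omega
      rw [binPmf_eq_zero hz2, mul_zero, ENNReal.ofReal_zero]
    · have hx : x < z.1 := by
        rw [Finset.mem_range] at hz1
        omega
      rw [binPmf_eq_zero hx, mul_zero, zero_mul, ENNReal.ofReal_zero]
  rw [tsum_eq_sum hvan, Finset.sum_product,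
    ENNReal.ofReal_sum_of_nonneg (fun y _ => Finset.sum_nonneg fun y' _ =>
      mul_nonneg (mul_nonneg (abs_nonneg _) (hb x y)) (hb x' y'))]
  refine Finset.sum_congr rfl fun y _ => ?_
  rw [ENNReal.ofReal_sum_of_nonneg (fun y' _ =>
      mul_nonneg (mul_nonneg (abs_nonneg _) (hb x y)) (hb x' y'))]

lemma G_mul_le {k m₁ m₂ : ℝ} (hk : 0 < k) (hm₁ : 0 < m₁) (hm : m₁ < m₂) :
    ENNReal.ofReal (m₁/m₂) *
      ∑' z : ℕ × ℕ, ENNReal.ofReal (|(z.1:ℝ) - (z.2:ℝ)| * nbPmf k m₂ z.1 * nbPmf k m₂ z.2)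
    ≤ ∑' z : ℕ × ℕ, ENNReal.ofReal (|(z.1:ℝ) - (z.2:ℝ)| * nbPmf k m₁ z.1 * nbPmf k m₁ z.2) := by
  have hm₂ : 0 < m₂ := hm₁.trans hm
  have hα0 : (0:ℝ) ≤ m₁/m₂ := by positivity
  have hα1 : m₁/m₂ ≤ 1 := le_of_lt ((div_lt_one hm₂).mpr hm)
  have hf₁ := nbPmf_nonneg hk hm₁
  have hf₂ := nbPmf_nonneg hk hm₂
  have hbn : ∀ a b : ℕ, 0 ≤ binPmf (m₁/m₂) a b := fun a b => binPmf_nonneg hα0 hα1 a b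
  have step1 : ∀ y : ℕ, ENNReal.ofReal (nbPmf k m₁ y)
      = ∑' x : ℕ, ENNReal.ofReal (nbPmf k m₂ x * binPmf (m₁/m₂) x y) := by
    intro y
    rw [← ENNReal.ofReal_tsum_of_nonneg (fun x => mul_nonneg (hf₂ x) (hbn x y))
      (hasSum_mix hk hm₁ hm y).summable]
    exact (congrArg ENNReal.ofReal (hasSum_mix hk hm₁ hm y).tsum_eq).symm
  have expand : ∀ z : ℕ × ℕ,
      ENNReal.ofReal (|(z.1:ℝ) - (z.2:ℝ)| * nbPmf k m₁ z.1 * nbPmf k m₁ z.2)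
      = ∑' w : ℕ × ℕ,
          ENNReal.ofReal (nbPmf k m₂ w.1 * binPmf (m₁/m₂) w.1 z.1)
            * ENNReal.ofReal (nbPmf k m₂ w.2 * binPmf (m₁/m₂) w.2 z.2)
            * ENNReal.ofReal |(z.1:ℝ) - (z.2:ℝ)| := by
    intro z
    have pc := ENN_prod_mul_const
      (fun x => ENNReal.ofReal (nbPmf k m₂ x * binPmf (m₁/m₂) x z.1))
      (fun x => ENNReal.ofReal (nbPmf k m₂ x * binPmf (m₁/m₂) x z.2))
      (ENNReal.ofReal |(z.1:ℝ) - (z.2:ℝ)|)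
    rw [ENNReal.ofReal_mul (mul_nonneg (abs_nonneg _) (hf₁ z.1)),
      ENNReal.ofReal_mul (abs_nonneg _), step1 z.1, step1 z.2]
    refine Eq.trans ?_ pc.symm
    ring
  have key : ∀ w : ℕ × ℕ,
      ENNReal.ofReal (nbPmf k m₂ w.1) * ENNReal.ofReal (nbPmf k m₂ w.2)
        * ENNReal.ofReal ((m₁/m₂) * |(w.1:ℝ) - (w.2:ℝ)|)
      ≤ ∑' z : ℕ × ℕ,
          ENNReal.ofReal (nbPmf k m₂ w.1 * binPmf (m₁/m₂) w.1 z.1)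
            * ENNReal.ofReal (nbPmf k m₂ w.2 * binPmf (m₁/m₂) w.2 z.2)
            * ENNReal.ofReal |(z.1:ℝ) - (z.2:ℝ)| := by
    intro w
    have hptw : ∀ z : ℕ × ℕ,
        ENNReal.ofReal (nbPmf k m₂ w.1 * binPmf (m₁/m₂) w.1 z.1)
          * ENNReal.ofReal (nbPmf k m₂ w.2 * binPmf (m₁/m₂) w.2 z.2)
          * ENNReal.ofReal |(z.1:ℝ) - (z.2:ℝ)|
        = (ENNReal.ofReal (nbPmf k m₂ w.1) * ENNReal.ofReal (nbPmf k m₂ w.2))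
          * ENNReal.ofReal (|(z.1:ℝ) - (z.2:ℝ)| * binPmf (m₁/m₂) w.1 z.1
              * binPmf (m₁/m₂) w.2 z.2) := by
      intro z
      rw [ENNReal.ofReal_mul (hf₂ w.1), ENNReal.ofReal_mul (hf₂ w.2),
        ENNReal.ofReal_mul (mul_nonneg (abs_nonneg _) (hbn w.1 z.1)),
        ENNReal.ofReal_mul (abs_nonneg _)]
      ring
    rw [tsum_congr hptw, ENNReal.tsum_mul_left, bin_tsum hα0 hα1 w.1 w.2,
      mul_assoc, mul_assoc]
    apply mul_le_mul_right
    apply mul_le_mul_right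
    exact ENNReal.ofReal_le_ofReal (jensen_bin hα0 hα1 w.1 w.2)
  have final : ∀ w : ℕ × ℕ,
      ENNReal.ofReal (m₁/m₂)
        * ENNReal.ofReal (|(w.1:ℝ) - (w.2:ℝ)| * nbPmf k m₂ w.1 * nbPmf k m₂ w.2)
      = ENNReal.ofReal (nbPmf k m₂ w.1) * ENNReal.ofReal (nbPmf k m₂ w.2)
        * ENNReal.ofReal ((m₁/m₂) * |(w.1:ℝ) - (w.2:ℝ)|) := by
    intro w
    rw [ENNReal.ofReal_mul (mul_nonneg (abs_nonneg _) (hf₂ w.1)),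
      ENNReal.ofReal_mul (abs_nonneg _), ENNReal.ofReal_mul hα0]
    ring
  calc ENNReal.ofReal (m₁/m₂) *
      ∑' z : ℕ × ℕ, ENNReal.ofReal (|(z.1:ℝ) - (z.2:ℝ)| * nbPmf k m₂ z.1 * nbPmf k m₂ z.2)
      = ∑' w : ℕ × ℕ, ENNReal.ofReal (m₁/m₂)
          * ENNReal.ofReal (|(w.1:ℝ) - (w.2:ℝ)| * nbPmf k m₂ w.1 * nbPmf k m₂ w.2) :=
        (ENNReal.tsum_mul_left).symm
    _ = ∑' w : ℕ × ℕ, ENNReal.ofReal (nbPmf k m₂ w.1) * ENNReal.ofReal (nbPmf k m₂ w.2)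
          * ENNReal.ofReal ((m₁/m₂) * |(w.1:ℝ) - (w.2:ℝ)|) := tsum_congr final
    _ ≤ ∑' w : ℕ × ℕ, ∑' z : ℕ × ℕ,
          ENNReal.ofReal (nbPmf k m₂ w.1 * binPmf (m₁/m₂) w.1 z.1)
            * ENNReal.ofReal (nbPmf k m₂ w.2 * binPmf (m₁/m₂) w.2 z.2)
            * ENNReal.ofReal |(z.1:ℝ) - (z.2:ℝ)| := ENNReal.tsum_le_tsum key
    _ = ∑' z : ℕ × ℕ, ∑' w : ℕ × ℕ,
          ENNReal.ofReal (nbPmf k m₂ w.1 * binPmf (m₁/m₂) w.1 z.1)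
            * ENNReal.ofReal (nbPmf k m₂ w.2 * binPmf (m₁/m₂) w.2 z.2)
            * ENNReal.ofReal |(z.1:ℝ) - (z.2:ℝ)| :=
        ENNReal.tsum_comm (f := fun w z : ℕ × ℕ =>
          ENNReal.ofReal (nbPmf k m₂ w.1 * binPmf (m₁/m₂) w.1 z.1)
            * ENNReal.ofReal (nbPmf k m₂ w.2 * binPmf (m₁/m₂) w.2 z.2)
            * ENNReal.ofReal |(z.1:ℝ) - (z.2:ℝ)|)
    _ = ∑' z : ℕ × ℕ, ENNReal.ofReal (|(z.1:ℝ) - (z.2:ℝ)| * nbPmf k m₁ z.1 * nbPmf k m₁ z.2) :=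
        (tsum_congr expand).symm

/-- The Gini index of the negative binomial distribution is decreasing
in the mean. -/
theorem nb_gini_decreasing_in_mean (k m₁ m₂ : ℝ) (hk : 0 < k)
    (hm₁ : 0 < m₁) (hm : m₁ < m₂) :
    (1 / (2 * m₂)) *
        ∑' x : ℕ, ∑' y : ℕ, |(x : ℝ) - (y : ℝ)| * nbPmf k m₂ x * nbPmf k m₂ y ≤
      (1 / (2 * m₁)) *
        ∑' x : ℕ, ∑' y : ℕ, |(x : ℝ) - (y : ℝ)| * nbPmf k m₁ x * nbPmf k m₁ y := by
  have hm₂ : 0 < m₂ := hm₁.trans hm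
  have hfin₁ := G_ne_top hk hm₁
  have hfin₂ := G_ne_top hk hm₂
  have hT₁ : (∑' x : ℕ, ∑' y : ℕ, |(x : ℝ) - (y : ℝ)| * nbPmf k m₁ x * nbPmf k m₁ y)
      = (∑' z : ℕ × ℕ,
          ENNReal.ofReal (|(z.1:ℝ) - (z.2:ℝ)| * nbPmf k m₁ z.1 * nbPmf k m₁ z.2)).toReal :=
    real_tsum_eq_toReal _ (fun x y => mul_nonneg
      (mul_nonneg (abs_nonneg _) (nbPmf_nonneg hk hm₁ x)) (nbPmf_nonneg hk hm₁ y)) hfin₁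
  have hT₂ : (∑' x : ℕ, ∑' y : ℕ, |(x : ℝ) - (y : ℝ)| * nbPmf k m₂ x * nbPmf k m₂ y)
      = (∑' z : ℕ × ℕ,
          ENNReal.ofReal (|(z.1:ℝ) - (z.2:ℝ)| * nbPmf k m₂ z.1 * nbPmf k m₂ z.2)).toReal :=
    real_tsum_eq_toReal _ (fun x y => mul_nonneg
      (mul_nonneg (abs_nonneg _) (nbPmf_nonneg hk hm₂ x)) (nbPmf_nonneg hk hm₂ y)) hfin₂
  rw [hT₁, hT₂]
  have hmain := G_mul_le hk hm₁ hm
  have hle := ENNReal.toReal_mono hfin₁ hmain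
  rw [ENNReal.toReal_mul, ENNReal.toReal_ofReal (by positivity : (0:ℝ) ≤ m₁/m₂)] at hle
  have ht₂ : (0:ℝ) ≤ (∑' z : ℕ × ℕ,
      ENNReal.ofReal (|(z.1:ℝ) - (z.2:ℝ)| * nbPmf k m₂ z.1 * nbPmf k m₂ z.2)).toReal :=
    ENNReal.toReal_nonneg
  rw [div_mul_eq_mul_div, div_mul_eq_mul_div, div_le_div_iff₀ (by positivity) (by positivity)]
  rw [div_mul_eq_mul_div, div_le_iff₀ hm₂] at hle
  nlinarith
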